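/- Under Rayleigh fading (all P_{νj} exponential with rate μ_{νj}, mutually independent, and independent of the uniform slot variables S_1,...,S_n on {1,...,m}), the full-duplex success probability satisfies E[X_{ij}] = Pr(P_{ij}/(N + Σ_{ν≠i,j} δ_{S_i S_ν} P_{νj}) ≥ θ) = e^{-μ_{ij} θ N} · Π_{ν≠i,j} (1 - (1/m) · θ/(θ + μ_{νj}/μ_{ij})). -/

import Mathlib

/-!
Conditionally on everything but the power `P i` of the desired link, success is the event
`P i ≥ θ (N + I)`, which has probability `exp (-λ_i θ (N + I))` by the exponential tail. The
exponential of the interference `I` factorises over the independent interferers, and each factor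
averages to `1 - (1/m) · λ_i θ / (λ_ν + λ_i θ)`: with probability `1/m` the interferer shares the
slot and contributes the Laplace transform `λ_ν / (λ_ν + λ_i θ)` of its power, otherwise it
contributes 1. This does not depend on the slot of `i`, so averaging over that slot changes
nothing.
-/

open MeasureTheory ProbabilityTheory Real
open scoped ENNReal

lemma setOf_le_div_ae_eq_setOf_mul_le {Ω : Type*} [MeasurableSpace Ω] {μ : Measure Ω}
    {X I : Ω → ℝ} {θ N : ℝ} (hN : 0 < N) (hI : ∀ᵐ ω ∂μ, 0 ≤ I ω) :
    {ω | θ ≤ X ω / (N + I ω)} =ᵐ[μ] {ω | θ * (N + I ω) ≤ X ω} := by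
  rw [Filter.eventuallyEq_set]
  filter_upwards [hI] with ω hω
  exact le_div_iff₀ (by linarith)

namespace ProbabilityTheory

lemma expMeasure_eq_withDensity (r : ℝ) : expMeasure r = volume.withDensity (exponentialPDF r) :=
  rfl

lemma measurable_exponentialPDF (r : ℝ) : Measurable (exponentialPDF r) :=
  (measurable_exponentialPDFReal r).ennreal_ofReal

lemma ae_nonneg_expMeasure (r : ℝ) : ∀ᵐ x ∂expMeasure r, 0 ≤ x := by
  rw [expMeasure_eq_withDensity, ae_withDensity_iff (measurable_exponentialPDF r)]
  exact ae_of_all _ fun x hx => not_lt.1 fun hneg => hx (exponentialPDF_of_neg hneg)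

lemma expMeasure_Ici {r x : ℝ} (hr : 0 < r) (hx : 0 ≤ x) :
    expMeasure r (Set.Ici x) = ENNReal.ofReal (exp (-(r * x))) := by
  have := isProbabilityMeasure_expMeasure hr
  have hIio : expMeasure r (Set.Iio x) = expMeasure r (Set.Iic x) :=
    measure_congr ((withDensity_absolutelyContinuous _ _).ae_eq Iio_ae_eq_Iic)
  rw [← Set.compl_Iio, prob_compl_eq_one_sub measurableSet_Iio, hIio, ← ofReal_cdf,
    cdf_expMeasure_eq hr, if_pos hx, ← ENNReal.ofReal_one,
    ← ENNReal.ofReal_sub _ (sub_nonneg.2 (exp_le_one_iff.2 (by nlinarith))), sub_sub_cancel]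

lemma lintegral_exp_neg_mul_expMeasure {r a : ℝ} (hra : 0 < r + a) :
    ∫⁻ p, ENNReal.ofReal (exp (-(a * p))) ∂expMeasure r = ENNReal.ofReal (r / (r + a)) := by
  have htilt (p : ℝ) : exponentialPDF r p * ENNReal.ofReal (exp (-(a * p))) =
      ENNReal.ofReal (r / (r + a)) * exponentialPDF (r + a) p := by
    rcases lt_or_ge p 0 with hp | hp
    · simp [exponentialPDF_of_neg hp]
    rw [exponentialPDF_of_nonneg hp, exponentialPDF_of_nonneg hp,
      ← ENNReal.ofReal_mul' (exp_pos _).le, ← ENNReal.ofReal_mul' (by positivity),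
      mul_assoc, ← exp_add]
    congr 1
    field_simp
    ring_nf
  rw [expMeasure_eq_withDensity, lintegral_withDensity_eq_lintegral_mul _
    (measurable_exponentialPDF r) (by fun_prop)]
  simp only [Pi.mul_apply, htilt]
  rw [lintegral_const_mul _ (measurable_exponentialPDF _), lintegral_exponentialPDF_eq_one hra,
    mul_one]

lemma measurable_exp_neg_mul_ite {α : Type*} [MeasurableSpace α] [MeasurableSingletonClass α]
    [DecidableEq α] (a : ℝ) (s : α) :
    Measurable fun z : ℝ × α => ENNReal.ofReal (exp (-(a * if s = z.2 then z.1 else 0))) := by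
  have hs : MeasurableSet {z : ℝ × α | s = z.2} := by
    simp_rw [eq_comm (a := s)]
    exact measurable_snd (measurableSet_singleton s)
  exact ((Measurable.ite hs measurable_fst measurable_const).const_mul a).neg.exp.ennreal_ofReal

section Independence

variable {Ω α β : Type*} [MeasurableSpace Ω] [MeasurableSpace α] [MeasurableSpace β]
  {μ : Measure Ω} [IsProbabilityMeasure μ] {r : ℝ} {P : Ω → ℝ} {S : Ω → α}

lemma map_prodMk_eq_expMeasure_prod (hP : Measurable P) (hS : Measurable S)
    (hPS : IndepFun P S μ) (hPdist : μ.map P = expMeasure r) :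
    μ.map (fun ω => (P ω, S ω)) = (expMeasure r).prod (μ.map S) := by
  rw [(indepFun_iff_map_prod_eq_prod_map_map hP.aemeasurable hS.aemeasurable).1 hPS, hPdist]

lemma measure_le_eq_lintegral_exp_of_indepFun {Y : Ω → β} (hr : 0 < r)
    (hP : Measurable P) (hS : Measurable S) (hY : Measurable Y)
    (hPS : IndepFun P S μ) (hPSY : IndepFun (fun ω => (P ω, S ω)) Y μ)
    (hPdist : μ.map P = expMeasure r) {g : α → β → ℝ} (hg : Measurable (Function.uncurry g))
    (hg0 : ∀ᵐ ω ∂μ, ∀ s, 0 ≤ g s (Y ω)) :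
    μ {ω | g (S ω) (Y ω) ≤ P ω} =
      ∫⁻ s, ∫⁻ ω, ENNReal.ofReal (exp (-(r * g s (Y ω)))) ∂μ ∂(μ.map S) := by
  have := isProbabilityMeasure_expMeasure hr
  have := Measure.isProbabilityMeasure_map (μ := μ) hS.aemeasurable
  have hPSm : Measurable fun ω => (P ω, S ω) := hP.prodMk hS
  set A : Set ((ℝ × α) × β) := {z | g z.1.2 z.2 ≤ z.1.1}
  have hA : MeasurableSet A :=
    measurableSet_le (hg.comp (measurable_fst.snd.prodMk measurable_snd)) measurable_fst.fst
  have hlaw : μ.map (fun ω => ((P ω, S ω), Y ω)) =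
      ((expMeasure r).prod (μ.map S)).prod (μ.map Y) := by
    rw [(indepFun_iff_map_prod_eq_prod_map_map hPSm.aemeasurable hY.aemeasurable).1 hPSY,
      map_prodMk_eq_expMeasure_prod hP hS hPS hPdist]
  have hslice : ∀ y, (∀ s, 0 ≤ g s y) → (expMeasure r).prod (μ.map S) ((·, y) ⁻¹' A) =
      ∫⁻ s, ENNReal.ofReal (exp (-(r * g s y))) ∂(μ.map S) := by
    intro y hy
    rw [Measure.prod_apply_symm (hA.preimage measurable_prodMk_right)]
    exact lintegral_congr fun s => expMeasure_Ici hr (hy s)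
  calc μ {ω | g (S ω) (Y ω) ≤ P ω}
      = ∫⁻ y, (expMeasure r).prod (μ.map S) ((·, y) ⁻¹' A) ∂(μ.map Y) := by
        rw [← Measure.prod_apply_symm hA, ← hlaw, Measure.map_apply (hPSm.prodMk hY) hA]
        rfl
    _ = ∫⁻ ω, ∫⁻ s, ENNReal.ofReal (exp (-(r * g s (Y ω)))) ∂(μ.map S) ∂μ := by
        rw [lintegral_map (measurable_measure_prodMk_right hA) hY]
        exact lintegral_congr_ae (hg0.mono fun ω hω => hslice _ hω)
    _ = _ := lintegral_lintegral_swap (by fun_prop)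

lemma lintegral_exp_neg_mul_ite_of_indepFun [MeasurableSingletonClass α] [DecidableEq α]
    (hr : 0 < r) {a : ℝ} (hra : 0 < r + a) (hP : Measurable P) (hS : Measurable S)
    (hPS : IndepFun P S μ) (hPdist : μ.map P = expMeasure r) (s : α) :
    ∫⁻ ω, ENNReal.ofReal (exp (-(a * if s = S ω then P ω else 0))) ∂μ =
      ENNReal.ofReal (1 - μ.real {ω | S ω = s} * (a / (r + a))) := by
  have := isProbabilityMeasure_expMeasure hr
  have := Measure.isProbabilityMeasure_map (μ := μ) hS.aemeasurable
  set q := μ.real {ω | S ω = s}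
  have hq : (μ.map S) {s} = ENNReal.ofReal q := by
    rw [Measure.map_apply hS (measurableSet_singleton s), ofReal_measureReal]
    rfl
  have hq0 : 0 ≤ q := measureReal_nonneg
  have hq1 : q ≤ 1 := measureReal_le_one
  have hinner (b : α) : ∫⁻ p, ENNReal.ofReal (exp (-(a * if s = b then p else 0))) ∂expMeasure r =
      if s = b then ENNReal.ofReal (r / (r + a)) else 1 := by
    split_ifs
    · exact lintegral_exp_neg_mul_expMeasure hra
    · simp
  have hF := measurable_exp_neg_mul_ite (α := α) a s
  calc ∫⁻ ω, ENNReal.ofReal (exp (-(a * if s = S ω then P ω else 0))) ∂μ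
      = ∫⁻ b, (if s = b then ENNReal.ofReal (r / (r + a)) else 1) ∂(μ.map S) := by
        rw [← lintegral_map hF (hP.prodMk hS), map_prodMk_eq_expMeasure_prod hP hS hPS hPdist,
          lintegral_prod_symm _ hF.aemeasurable]
        exact lintegral_congr hinner
    _ = ENNReal.ofReal (r / (r + a)) * ENNReal.ofReal q + ENNReal.ofReal (1 - q) := by
        rw [← lintegral_add_compl _ (measurableSet_singleton s),
          setLIntegral_congr_fun (measurableSet_singleton s) fun b hb => if_pos hb.symm,
          setLIntegral_congr_fun (measurableSet_singleton s).compl fun b hb => if_neg (Ne.symm hb),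
          setLIntegral_const, setLIntegral_const, one_mul,
          prob_compl_eq_one_sub (measurableSet_singleton s), hq, ENNReal.ofReal_sub _ hq0,
          ENNReal.ofReal_one]
    _ = _ := by
        rw [← ENNReal.ofReal_mul (by positivity),
          ← ENNReal.ofReal_add (by positivity) (by linarith)]
        congr 1
        field_simp
        ring

end Independence

/-- The paper's `∑_ν δ_{s S_ν} P_ν`, with `y ν = (P_ν, S_ν)`. -/
def slotInterference {ι α : Type*} [Fintype ι] [DecidableEq α] (s : α) (y : ι → ℝ × α) : ℝ :=
  ∑ ν, if s = (y ν).2 then (y ν).1 else 0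

lemma measurable_slotInterference {ι α : Type*} [Fintype ι] [DecidableEq α] [MeasurableSpace α]
    [MeasurableEq α] : Measurable (Function.uncurry (slotInterference (ι := ι) (α := α))) := by
  refine Finset.measurable_sum _ fun ν _ => ?_
  have hν : Measurable fun z : α × (ι → ℝ × α) => z.2 ν :=
    (measurable_pi_apply ν).comp measurable_snd
  exact Measurable.ite (measurableSet_eq_fun measurable_fst hν.snd) hν.fst measurable_const

lemma lintegral_exp_neg_mul_add_slotInterference {Ω ι α : Type*} [MeasurableSpace Ω]
    [MeasurableSpace α] [MeasurableSingletonClass α] [DecidableEq α] {μ : Measure Ω}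
    {P : ι → Ω → ℝ} {S : ι → Ω → α} {r : ι → ℝ} (hr : ∀ ν, 0 < r ν) {a : ℝ} (ha : 0 ≤ a)
    (hP : ∀ ν, Measurable (P ν)) (hS : ∀ ν, Measurable (S ν))
    (hPS : ∀ ν, IndepFun (P ν) (S ν) μ) (hPdist : ∀ ν, μ.map (P ν) = expMeasure (r ν))
    (hindep : iIndepFun (fun ν ω => (P ν ω, S ν ω)) μ) (N : ℝ) (T : Finset ι) (s : α) :
    ∫⁻ ω, ENNReal.ofReal (exp (-(a * (N + slotInterference s fun ν : T => (P ν ω, S ν ω))))) ∂μ =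
      ENNReal.ofReal (exp (-(a * N)) *
        ∏ ν ∈ T, (1 - μ.real {ω | S ν ω = s} * (a / (r ν + a)))) := by
  have := hindep.isProbabilityMeasure
  set X : ι → Ω → ℝ≥0∞ := fun ν ω => ENNReal.ofReal (exp (-(a * if s = S ν ω then P ν ω else 0)))
  have hX (ν : ι) : Measurable (X ν) :=
    (measurable_exp_neg_mul_ite a s).comp ((hP ν).prodMk (hS ν))
  have hsplit (ω : Ω) :
      ENNReal.ofReal (exp (-(a * (N + slotInterference s fun ν : T => (P ν ω, S ν ω))))) =
        ENNReal.ofReal (exp (-(a * N))) * ∏ ν ∈ T, X ν ω := by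
    rw [← ENNReal.ofReal_prod_of_nonneg fun _ _ => (exp_pos _).le,
      ← ENNReal.ofReal_mul (exp_pos _).le, ← exp_sum, ← exp_add, slotInterference, mul_add,
      neg_add, Finset.mul_sum, ← Finset.sum_neg_distrib,
      ← Finset.sum_coe_sort T fun ν => -(a * if s = S ν ω then P ν ω else 0)]
  have hfactor (ν : ι) : 0 ≤ 1 - μ.real {ω | S ν ω = s} * (a / (r ν + a)) := by
    have hrν := hr ν
    exact sub_nonneg.2 (mul_le_one₀ measureReal_le_one (by positivity)
      (div_le_one_of_le₀ (by linarith) (by positivity)))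
  simp only [hsplit]
  rw [lintegral_const_mul _ (Finset.measurable_prod T fun ν _ => hX ν),
    lintegral_prod_eq_prod_lintegral_of_indepFun T X (hindep.comp _ fun _ =>
      measurable_exp_neg_mul_ite a s) hX,
    ENNReal.ofReal_mul (exp_pos _).le, ENNReal.ofReal_prod_of_nonneg fun ν _ => hfactor ν]
  exact congrArg _ (Finset.prod_congr rfl fun ν _ => lintegral_exp_neg_mul_ite_of_indepFun (hr ν)
    (by linarith [hr ν]) (hP ν) (hS ν) (hPS ν) (hPdist ν) s)

theorem measure_sinr_ge_eq_lintegral {Ω ι α : Type*} [MeasurableSpace Ω] [MeasurableSpace α]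
    [MeasurableEq α] [DecidableEq α] {μ : Measure Ω} [IsProbabilityMeasure μ]
    {P : ι → Ω → ℝ} {S : ι → Ω → α} {r : ι → ℝ} (hr : ∀ ν, 0 < r ν)
    (hP : ∀ ν, Measurable (P ν)) (hS : ∀ ν, Measurable (S ν))
    (hPS : ∀ ν, IndepFun (P ν) (S ν) μ) (hPdist : ∀ ν, μ.map (P ν) = expMeasure (r ν))
    (hindep : iIndepFun (fun ν ω => (P ν ω, S ν ω)) μ)
    {N θ : ℝ} (hN : 0 < N) (hθ : 0 ≤ θ) {i : ι} {T : Finset ι} (hi : i ∉ T) :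
    μ {ω | θ ≤ P i ω / (N + ∑ ν ∈ T, if S i ω = S ν ω then P ν ω else 0)} =
      ∫⁻ s, ENNReal.ofReal (exp (-(r i * θ * N)) *
        ∏ ν ∈ T, (1 - μ.real {ω | S ν ω = s} * (r i * θ / (r ν + r i * θ)))) ∂(μ.map (S i)) := by
  set Y : Ω → T → ℝ × α := fun ω ν => (P ν ω, S ν ω)
  have hpair (ν : ι) : Measurable fun ω => (P ν ω, S ν ω) := (hP ν).prodMk (hS ν)
  have hY : Measurable Y := measurable_pi_lambda _ fun ν => hpair ν
  have hiY : IndepFun (fun ω => (P i ω, S i ω)) Y μ :=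
    (hindep.indepFun_finset {i} T (Finset.disjoint_singleton_left.2 hi) hpair).comp
      (measurable_pi_apply (⟨i, Finset.mem_singleton_self i⟩ : ({i} : Finset ι))) measurable_id
  have hI0 : ∀ᵐ ω ∂μ, ∀ s, 0 ≤ slotInterference s (Y ω) :=
    (Filter.eventually_all.2 fun ν : T => ae_of_ae_map (hP ν).aemeasurable
      (hPdist ν ▸ ae_nonneg_expMeasure (r ν))).mono fun ω hω s =>
        Finset.sum_nonneg fun ν _ => by split_ifs <;> simp [Y, hω ν]
  have hsum (s : α) (ω : Ω) :
      ∑ ν ∈ T, (if s = S ν ω then P ν ω else 0) = slotInterference s (Y ω) :=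
    (Finset.sum_coe_sort T fun ν => if s = S ν ω then P ν ω else 0).symm
  simp only [hsum]
  rw [measure_congr (setOf_le_div_ae_eq_setOf_mul_le hN (hI0.mono fun ω hω => hω _)),
    measure_le_eq_lintegral_exp_of_indepFun (hr i) (hP i) (hS i) hY (hPS i) hiY (hPdist i)
      (g := fun s y => θ * (N + slotInterference s y))
      (measurable_const.mul (measurable_const.add measurable_slotInterference))
      (hI0.mono fun ω hω s => mul_nonneg hθ (add_nonneg hN.le (hω s)))]
  refine lintegral_congr fun s => ?_
  simp only [← mul_assoc]
  exact lintegral_exp_neg_mul_add_slotInterference hr (mul_nonneg (hr i).le hθ)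
    hP hS hPS hPdist hindep N T s

end ProbabilityTheory

theorem stmt8_general {Ω : Type*} [MeasurableSpace Ω] (Pr : Measure Ω) [IsProbabilityMeasure Pr]
    (n m : ℕ)
    (N θ : ℝ) (hN : 0 < N) (hθ : 0 < θ)
    (i j : Fin n)
    (P : Fin n → Ω → ℝ) (lam : Fin n → ℝ) (hlam : ∀ ν, 0 < lam ν)
    (S : Fin n → Ω → Fin m)
    (hPmeas : ∀ ν, Measurable (P ν)) (hSmeas : ∀ ν, Measurable (S ν))
    (hPdist : ∀ ν, Pr.map (P ν) = expMeasure (lam ν))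
    (hSunif : ∀ ν b, Pr {ω | S ν ω = b} = 1 / (m : ℝ≥0∞))
    (hindep : iIndepFun (fun ν ω => (P ν ω, S ν ω)) Pr)
    (hindepPS : ∀ ν, IndepFun (P ν) (S ν) Pr) :
    Pr {ω | θ ≤ P i ω /
        (N + ∑ ν ∈ Finset.univ \ {i, j}, if S i ω = S ν ω then P ν ω else 0)} =
      ENNReal.ofReal (Real.exp (-(lam i * θ * N)) *
        ∏ ν ∈ Finset.univ \ {i, j},
          (1 - (1 / (m : ℝ)) * (θ / (θ + lam ν / lam i)))) := by
  have hcoef (ν : Fin n) (s : Fin m) :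
      Pr.real {ω | S ν ω = s} * (lam i * θ / (lam ν + lam i * θ)) =
        1 / (m : ℝ) * (θ / (θ + lam ν / lam i)) := by
    have := hlam i
    rw [measureReal_def, hSunif, ENNReal.toReal_div, ENNReal.toReal_one, ENNReal.toReal_natCast]
    field_simp
    ring
  have := Measure.isProbabilityMeasure_map (μ := Pr) (hSmeas i).aemeasurable
  rw [measure_sinr_ge_eq_lintegral hlam hPmeas hSmeas hindepPS hPdist hindep hN hθ.le
    (by simp : i ∉ Finset.univ \ {i, j})]
  simp only [hcoef, lintegral_const, measure_univ, mul_one]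

/-- Under Rayleigh fading (`P ν` = exponential fading power of link `ν → j` with rate
`lam ν`, all mutually independent and independent of the independent uniform slot
variables `S ν` on `{1,...,m}`), the full-duplex success probability satisfies
`E[X_{ij}] = Pr(P i/(N + Σ_{ν≠i,j} δ_{S i, S ν} P ν) ≥ θ)
           = e^{-lam i · θ · N} · Π_{ν≠i,j} (1 - (1/m)·θ/(θ + lam ν/lam i))`.
Mutual independence of all fading and slot variables is encoded by mutual
independence of the pairs `(P ν, S ν)` across `ν` together with independence of
`P ν` and `S ν` for each `ν`. -/
theorem stmt8 {Ω : Type*} [MeasurableSpace Ω] (Pr : Measure Ω) [IsProbabilityMeasure Pr]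
    (n m : ℕ) (hn : 3 ≤ n) (hm : 1 ≤ m)
    (N θ : ℝ) (hN : 0 < N) (hθ : 0 < θ)
    (i j : Fin n) (hij : i ≠ j)
    (P : Fin n → Ω → ℝ) (lam : Fin n → ℝ) (hlam : ∀ ν, 0 < lam ν)
    (S : Fin n → Ω → Fin m)
    (hPmeas : ∀ ν, Measurable (P ν)) (hSmeas : ∀ ν, Measurable (S ν))
    (hPdist : ∀ ν, Pr.map (P ν) = expMeasure (lam ν))
    (hSunif : ∀ ν b, Pr {ω | S ν ω = b} = 1 / (m : ℝ≥0∞))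
    (hindep : iIndepFun (fun ν ω => (P ν ω, S ν ω)) Pr)
    (hindepPS : ∀ ν, IndepFun (P ν) (S ν) Pr) :
    Pr {ω | θ ≤ P i ω /
        (N + ∑ ν ∈ Finset.univ \ {i, j}, if S i ω = S ν ω then P ν ω else 0)} =
      ENNReal.ofReal (Real.exp (-(lam i * θ * N)) *
        ∏ ν ∈ Finset.univ \ {i, j},
          (1 - (1 / (m : ℝ)) * (θ / (θ + lam ν / lam i)))) :=
  stmt8_general Pr n m N θ hN hθ i j P lam hlam S hPmeas hSmeas hPdist hSunif hindep hindepPS
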